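/- Let k be a nonnegative integer and 0 < α < 1. The map u ↦ M(ξ)·u, where M(ξ) is the 2×2 real matrix [[Re ξ, Im ξ], [-Im ξ, Re ξ]] for ξ ∈ bΔ, is a Banach space isomorphism from (C^{k,α}_o)² onto (C^{k,α}_e)², where C^{k,α}_o and C^{k,α}_e are respectively the odd and even real-valued C^{k,α} functions on bΔ. -/

import Mathlib

noncomputable section

open Complex Metric Set Finset
open scoped Classical

/-- The closed unit disc in `ℂ`, as a type. -/
abbrev ClosedDisc : Type := (Metric.closedBall (0 : ℂ) 1 : Set ℂ)

/-- The inclusion of the unit circle `bΔ` into the closed unit disc. -/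
def bd (z : Circle) : ClosedDisc :=
  ⟨(z : ℂ), by simp [Metric.mem_closedBall, dist_zero_right, Circle.norm_coe]⟩

/-- Negation on the circle. -/
def negCircle (z : Circle) : Circle :=
  ⟨-(z : ℂ), mem_sphere_zero_iff_norm.2 (by simp [Circle.norm_coe])⟩

/-- The angular lift of a function on the unit circle. -/
def liftC (f : Circle → ℂ) : ℝ → ℂ := fun θ => f (Circle.exp θ)

/-- `f` belongs to `C^{k,α}_ℂ(bΔ)`: its angular lift is `C^k` and the `k`-th derivative of the
lift is `α`-Hölder. -/
def IsCkC (k : ℕ) (α : ℝ) (f : Circle → ℂ) : Prop :=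
  ContDiff ℝ (k : ℕ∞) (liftC f) ∧
    ∃ C : NNReal, HolderWith C α.toNNReal (iteratedDeriv k (liftC f))

/-- `f` takes real values. -/
def IsRealValued (f : Circle → ℂ) : Prop := ∀ z, (f z).im = 0

/-- The space `C^{k,α} = C^{k,α}(bΔ, ℝ)` of real-valued Hölder functions. -/
def CkR (k : ℕ) (α : ℝ) : Set (Circle → ℂ) := {f | IsCkC k α f ∧ IsRealValued f}

/-- The space `C^{k,α}_ℂ`. -/
def CkC (k : ℕ) (α : ℝ) : Set (Circle → ℂ) := {f | IsCkC k α f}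

/-- The odd real-valued functions of class `C^{k,α}`. -/
def CkOdd (k : ℕ) (α : ℝ) : Set (Circle → ℂ) :=
  {f | IsCkC k α f ∧ IsRealValued f ∧ ∀ z : Circle, f (negCircle z) = -f z}

/-- The even real-valued functions of class `C^{k,α}`. -/
def CkEven (k : ℕ) (α : ℝ) : Set (Circle → ℂ) :=
  {f | IsCkC k α f ∧ IsRealValued f ∧ ∀ z : Circle, f (negCircle z) = f z}

/-- The subspace `R_m = {v ∈ C^{k,α}_ℂ | v(ζ) = (-1)^m ζ^{-m} conj (v ζ)}`. -/
def Rm (k : ℕ) (α : ℝ) (m : ℤ) : Set (Circle → ℂ) :=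
  {v | IsCkC k α v ∧
    ∀ z : Circle, v z = (-1 : ℂ) ^ m * (z : ℂ) ^ (-m) * (starRingEnd ℂ) (v z)}

/-- The space `C^{k,α}_{0^m}` of real-valued functions of the form `(1-ζ)^m v`,
`v ∈ C^{k,α}_ℂ`. -/
def C0m (k : ℕ) (α : ℝ) (m : ℕ) : Set (Circle → ℂ) :=
  {φ | IsRealValued φ ∧ ∃ v, IsCkC k α v ∧ ∀ z : Circle, φ z = (1 - (z : ℂ)) ^ m * v z}

/-- Sup norm of the lift. -/
def supN (g : ℝ → ℂ) : ℝ := ⨆ θ : ℝ, ‖g θ‖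

/-- Hölder seminorm (computed through the angular lift). -/
def holderSem (α : ℝ) (g : ℝ → ℂ) : ℝ :=
  ⨆ p : ℝ × ℝ, if (Circle.exp p.1 : ℂ) = Circle.exp p.2 then 0
    else ‖g p.1 - g p.2‖ / ‖(Circle.exp p.1 : ℂ) - (Circle.exp p.2 : ℂ)‖ ^ α

/-- The `C^{k,α}` norm. -/
def normCkR (k : ℕ) (α : ℝ) (f : Circle → ℂ) : ℝ :=
  (∑ j ∈ Finset.range (k + 1), supN (iteratedDeriv j (liftC f))) +
    holderSem α (iteratedDeriv k (liftC f))

/-- The `C^{k,α}_ℂ` norm `‖Re v‖ + ‖Im v‖`. -/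
def normCkC (k : ℕ) (α : ℝ) (f : Circle → ℂ) : ℝ :=
  normCkR k α (fun z => ((f z).re : ℂ)) + normCkR k α (fun z => ((f z).im : ℂ))

/-- The norm of `C^{k,α}_{0^m}`: `‖(1-ζ)^m v‖ = ‖v‖_{C^{k,α}_ℂ}`. -/
def normC0m (k : ℕ) (α : ℝ) (m : ℕ) (φ : Circle → ℂ) : ℝ :=
  sInf {r | ∃ v, IsCkC k α v ∧ (∀ z : Circle, φ z = (1 - (z : ℂ)) ^ m * v z) ∧
    r = normCkC k α v}

/-- Extension of a function on the closed disc to the plane (by junk value `0`). -/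
def extD (f : ClosedDisc → ℂ) : ℂ → ℂ :=
  fun z => if h : z ∈ Metric.closedBall (0 : ℂ) 1 then f ⟨z, h⟩ else 0

/-- Boundary trace of a function on the closed disc. -/
def bTrace (f : ClosedDisc → ℂ) : Circle → ℂ := fun z => f (bd z)

/-- `f ∈ A^{k,α}`: `f` is continuous on the closed disc, holomorphic on the open disc, and its
boundary trace is of class `C^{k,α}_ℂ`. -/
def IsA (k : ℕ) (α : ℝ) (f : ClosedDisc → ℂ) : Prop :=
  ContinuousOn (extD f) (Metric.closedBall 0 1) ∧
    DifferentiableOn ℂ (extD f) (Metric.ball 0 1) ∧ IsCkC k α (bTrace f)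

/-- The space `(1-ζ)^m A^{k,α}`. -/
def mA (k : ℕ) (α : ℝ) (m : ℕ) : Set (ClosedDisc → ℂ) :=
  {φ | ∃ f, IsA k α f ∧ ∀ z : ClosedDisc, φ z = (1 - (z : ℂ)) ^ m * f z}

/-- The norm of `A^{k,α}` (the `C^{k,α}_ℂ` norm of the boundary trace). -/
def normA (k : ℕ) (α : ℝ) (f : ClosedDisc → ℂ) : ℝ := normCkC k α (bTrace f)

/-- The norm of `(1-ζ)^m A^{k,α}`: `‖(1-ζ)^m f‖ = ‖f‖`. -/
def normmA (k : ℕ) (α : ℝ) (m : ℕ) (φ : ClosedDisc → ℂ) : ℝ :=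
  sInf {r | ∃ f, IsA k α f ∧ (∀ z : ClosedDisc, φ z = (1 - (z : ℂ)) ^ m * f z) ∧
    r = normA k α f}

/-- A subset `K` of a real vector space (in practice, a linear subspace) has real dimension `d`:
there are `d` linearly independent elements of `K` spanning `K`. -/
def HasRealDim {X : Type*} [AddCommGroup X] [Module ℝ X] (K : Set X) (d : ℕ) : Prop :=
  ∃ b : Fin d → X, (∀ i, b i ∈ K) ∧ LinearIndependent ℝ b ∧
    ∀ f ∈ K, ∃ c : Fin d → ℝ, f = ∑ i, c i • b i

/-!
`M(ξ)` is orthogonal, so `u ↦ M u` is inverted by `v ↦ Mᵀ v`. The entries of `M` and `Mᵀ` are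
real and odd, so both maps exchange odd and even real-valued pairs; they are also smooth, and
everything reduces to the boundedness of multiplication by a `C^{k+1}` function `E` on `C^{k,α}`.
By Leibniz, `(E f)^{(k)} = ∑ C(k,i) E^{(i)} f^{(k-i)}`, and every factor is bounded and
`α`-Hölder for the chord distance: `f^{(k)}` by assumption, the others because their derivatives
are bounded and `α ≤ 1`. Hölder continuity in the angle and in the chord are equivalent since,
after reducing `a - b` modulo `2π`, `|a - b| ≤ (π/2) |e^{ia} - e^{ib}|` (Jordan's inequality).
-/

open scoped Real

lemma norm_circleExp_sub_circleExp (a b : ℝ) :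
    ‖(Circle.exp a : ℂ) - Circle.exp b‖ = ‖exp (I * (a - b : ℝ)) - 1‖ := by
  have h : (Circle.exp a : ℂ) = Circle.exp b * exp (I * (a - b : ℝ)) := by
    rw [Circle.coe_exp, Circle.coe_exp, ← Complex.exp_add]
    push_cast
    ring_nf
  rw [h, ← mul_sub_one, norm_mul, Circle.norm_coe, one_mul]

lemma norm_circleExp_sub_le (a b : ℝ) : ‖(Circle.exp a : ℂ) - Circle.exp b‖ ≤ |a - b| := by
  rw [norm_circleExp_sub_circleExp, ← Real.norm_eq_abs]
  exact Real.norm_exp_I_mul_ofReal_sub_one_le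

lemma norm_circleExp_sub_le_two (a b : ℝ) : ‖(Circle.exp a : ℂ) - Circle.exp b‖ ≤ 2 :=
  (norm_sub_le _ _).trans (by rw [Circle.norm_coe, Circle.norm_coe]; norm_num)

lemma exists_abs_sub_le_norm_circleExp_sub (a b : ℝ) :
    ∃ n : ℤ, |a - (b + n * (2 * π))| ≤ π / 2 * ‖(Circle.exp a : ℂ) - Circle.exp b‖ := by
  set n := round ((a - b) / (2 * π))
  set x := a - (b + n * (2 * π))
  have hx : |x| ≤ π := by
    have hx' : x = ((a - b) / (2 * π) - n) * (2 * π) := by field_simp; ring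
    have := abs_sub_round ((a - b) / (2 * π))
    rw [hx', abs_mul, abs_of_pos Real.two_pi_pos]
    nlinarith [Real.pi_pos]
  refine ⟨n, ?_⟩
  have hexp : Circle.exp (b + n * (2 * π)) = Circle.exp b := Circle.periodic_exp.int_mul n b
  have hsin := Real.mul_abs_le_abs_sin (x := x / 2) (by rw [abs_div, abs_two]; linarith)
  rw [← hexp, norm_circleExp_sub_circleExp, norm_exp_I_mul_ofReal_sub_one, norm_mul,
    Real.norm_eq_abs, Real.norm_eq_abs, abs_two]
  rw [abs_div, abs_two] at hsin
  have := Real.pi_pos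
  calc |x| = π / 2 * (2 * (2 / π * (|x| / 2))) := by field_simp
    _ ≤ π / 2 * (2 * |Real.sin (x / 2)|) := by gcongr

lemma le_two_mul_rpow {x α : ℝ} (hx : 0 ≤ x) (hx2 : x ≤ 2) (hα : 0 ≤ α) (hα1 : α ≤ 1) :
    x ≤ 2 * x ^ α := by
  have h : x / 2 ≤ (x / 2) ^ α := Real.self_le_rpow_of_le_one (by positivity) (by linarith) hα1
  have h2 : 1 ≤ (2 : ℝ) ^ α := Real.one_le_rpow (by norm_num) hα
  rw [Real.div_rpow hx zero_le_two, le_div_iff₀ (by positivity)] at h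
  nlinarith [Real.rpow_nonneg hx α]

/-- Hölder continuity for the chord distance of `bΔ`, the distance used by `holderSem`. -/
def ChordHolder (α C : ℝ) (g : ℝ → ℂ) : Prop :=
  ∀ a b : ℝ, ‖g a - g b‖ ≤ C * ‖(Circle.exp a : ℂ) - Circle.exp b‖ ^ α

namespace ChordHolder

variable {α C C' : ℝ} {g h : ℝ → ℂ}

lemma mono (hg : ChordHolder α C g) (hC : C ≤ C') : ChordHolder α C' g :=
  fun a b => (hg a b).trans (mul_le_mul_of_nonneg_right hC (by positivity))

lemma add (hg : ChordHolder α C g) (hh : ChordHolder α C' h) :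
    ChordHolder α (C + C') (g + h) := fun a b =>
  calc ‖(g + h) a - (g + h) b‖ = ‖(g a - g b) + (h a - h b)‖ := by
        rw [Pi.add_apply, Pi.add_apply, add_sub_add_comm]
    _ ≤ _ := (norm_add_le _ _).trans (by rw [add_mul]; exact add_le_add (hg a b) (hh a b))

lemma sum {ι : Type*} {s : Finset ι} {g : ι → ℝ → ℂ} {C : ι → ℝ}
    (hg : ∀ i ∈ s, ChordHolder α (C i) (g i)) :
    ChordHolder α (∑ i ∈ s, C i) (fun x => ∑ i ∈ s, g i x) := fun a b =>
  calc ‖∑ i ∈ s, g i a - ∑ i ∈ s, g i b‖ = ‖∑ i ∈ s, (g i a - g i b)‖ := by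
        rw [Finset.sum_sub_distrib]
    _ ≤ ∑ i ∈ s, ‖g i a - g i b‖ := norm_sum_le _ _
    _ ≤ _ := by rw [Finset.sum_mul]; exact Finset.sum_le_sum fun i hi => hg i hi a b

lemma const_mul (c : ℂ) (hg : ChordHolder α C g) :
    ChordHolder α (‖c‖ * C) (fun x => c * g x) := fun a b => by
  rw [← mul_sub, norm_mul, mul_assoc]
  exact mul_le_mul_of_nonneg_left (hg a b) (norm_nonneg c)

lemma mul {A B U V : ℝ} (hg : ChordHolder α A g) (hh : ChordHolder α B h)
    (hgU : ∀ x, ‖g x‖ ≤ U) (hhV : ∀ x, ‖h x‖ ≤ V) :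
    ChordHolder α (U * B + A * V) (fun x => g x * h x) := fun a b =>
  calc ‖g a * h a - g b * h b‖ = ‖g a * (h a - h b) + (g a - g b) * h b‖ := by ring_nf
    _ ≤ ‖g a‖ * ‖h a - h b‖ + ‖g a - g b‖ * ‖h b‖ :=
        (norm_add_le _ _).trans (by rw [norm_mul, norm_mul])
    _ ≤ U * (B * ‖(Circle.exp a : ℂ) - Circle.exp b‖ ^ α)
          + A * ‖(Circle.exp a : ℂ) - Circle.exp b‖ ^ α * V :=
        add_le_add (mul_le_mul (hgU a) (hh a b) (norm_nonneg _) ((norm_nonneg _).trans (hgU a)))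
          (mul_le_mul (hg a b) (hhV b) (norm_nonneg _) ((norm_nonneg _).trans (hg a b)))
    _ = _ := by ring

lemma of_lipschitzWith (hα : 0 ≤ α) (hα1 : α ≤ 1) {L : NNReal} (hg : LipschitzWith L g)
    (hper : Function.Periodic g (2 * π)) : ChordHolder α (π * L) g := fun a b => by
  obtain ⟨n, hn⟩ := exists_abs_sub_le_norm_circleExp_sub a b
  set d := ‖(Circle.exp a : ℂ) - Circle.exp b‖
  have hd : d ≤ 2 * d ^ α :=
    le_two_mul_rpow (norm_nonneg _) (norm_circleExp_sub_le_two a b) hα hα1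
  calc ‖g a - g b‖ = dist (g a) (g (b + n * (2 * π))) := by
        rw [hper.int_mul n b, dist_eq_norm]
    _ ≤ L * |a - (b + n * (2 * π))| := by rw [← Real.dist_eq]; exact hg.dist_le_mul _ _
    _ ≤ L * (π / 2 * (2 * d ^ α)) := by gcongr; exact hn.trans (by gcongr)
    _ = π * L * d ^ α := by ring

lemma of_holderWith (hα : 0 < α) {K : NNReal} (hg : HolderWith K α.toNNReal g)
    (hper : Function.Periodic g (2 * π)) : ChordHolder α (K * (π / 2) ^ α) g := fun a b => by
  obtain ⟨n, hn⟩ := exists_abs_sub_le_norm_circleExp_sub a b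
  calc ‖g a - g b‖ = dist (g a) (g (b + n * (2 * π))) := by
        rw [hper.int_mul n b, dist_eq_norm]
    _ ≤ K * |a - (b + n * (2 * π))| ^ α := by
        rw [← Real.dist_eq, ← Real.coe_toNNReal α hα.le]; exact hg.dist_le _ _
    _ ≤ K * (π / 2 * ‖(Circle.exp a : ℂ) - Circle.exp b‖) ^ α := by gcongr
    _ = K * (π / 2) ^ α * ‖(Circle.exp a : ℂ) - Circle.exp b‖ ^ α := by
        rw [Real.mul_rpow (by positivity) (norm_nonneg _), mul_assoc]

lemma holderWith (hα : 0 ≤ α) (hg : ChordHolder α C g) :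
    HolderWith C.toNNReal α.toNNReal g := by
  intro a b
  have h : ‖g a - g b‖ ≤ C.toNNReal * |a - b| ^ α :=
    (hg a b).trans (mul_le_mul (Real.le_coe_toNNReal C)
      (Real.rpow_le_rpow (norm_nonneg _) (norm_circleExp_sub_le a b) hα) (by positivity)
      (by positivity))
  rw [edist_dist, edist_dist, dist_eq_norm, Real.dist_eq, Real.coe_toNNReal α hα,
    ENNReal.ofReal_rpow_of_nonneg (abs_nonneg _) hα, ← ENNReal.ofReal_coe_nnreal,
    ← ENNReal.ofReal_mul (by positivity)]
  exact ENNReal.ofReal_le_ofReal h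

end ChordHolder

lemma Function.Periodic.iteratedDeriv {𝕜 F : Type*} [NontriviallyNormedField 𝕜]
    [NormedAddCommGroup F] [NormedSpace 𝕜 F] {g : 𝕜 → F} {c : 𝕜} (hg : Function.Periodic g c)
    (n : ℕ) : Function.Periodic (iteratedDeriv n g) c := fun t => by
  rw [← congrFun (iteratedDeriv_comp_add_const n g c) t, funext hg]

lemma periodic_liftC (f : Circle → ℂ) : Function.Periodic (liftC f) (2 * π) :=
  fun θ => congrArg f (Circle.periodic_exp θ)

lemma holderSem_nonneg (α : ℝ) (g : ℝ → ℂ) : 0 ≤ holderSem α g :=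
  Real.iSup_nonneg fun _ => by split <;> positivity

lemma holderSem_le {α C : ℝ} {g : ℝ → ℂ} (hC : 0 ≤ C) (hg : ChordHolder α C g) :
    holderSem α g ≤ C := by
  refine ciSup_le fun p => ?_
  split_ifs with hp
  · exact hC
  · rw [div_le_iff₀ (by positivity [sub_ne_zero.2 hp])]
    exact hg p.1 p.2

lemma ChordHolder.holderSem {α C : ℝ} {g : ℝ → ℂ} (hα : 0 < α) (hg : ChordHolder α C g) :
    ChordHolder α (holderSem α g) g := fun a b => by
  by_cases hab : (Circle.exp a : ℂ) = Circle.exp b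
  · simpa [hab, Real.zero_rpow hα.ne'] using hg a b
  have hd : 0 < ‖(Circle.exp a : ℂ) - Circle.exp b‖ ^ α := by positivity [sub_ne_zero.2 hab]
  have hbdd : BddAbove (range fun p : ℝ × ℝ => if (Circle.exp p.1 : ℂ) = Circle.exp p.2 then 0
      else ‖g p.1 - g p.2‖ / ‖(Circle.exp p.1 : ℂ) - (Circle.exp p.2 : ℂ)‖ ^ α) := by
    refine ⟨max C 0, ?_⟩
    rintro _ ⟨p, rfl⟩
    dsimp only
    split_ifs with hp
    · exact le_max_right _ _
    · rw [div_le_iff₀ (by positivity [sub_ne_zero.2 hp])]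
      exact (hg p.1 p.2).trans (by gcongr; exact le_max_left _ _)
  have := le_ciSup hbdd (a, b)
  rw [if_neg hab, div_le_iff₀ hd] at this
  exact this

lemma supN_nonneg (g : ℝ → ℂ) : 0 ≤ supN g :=
  Real.iSup_nonneg fun _ => norm_nonneg _

lemma supN_le {g : ℝ → ℂ} {B : ℝ} (hg : ∀ θ, ‖g θ‖ ≤ B) : supN g ≤ B :=
  ciSup_le hg

lemma norm_le_supN {g : ℝ → ℂ} (hper : Function.Periodic g (2 * π)) (hg : Continuous g)
    (θ : ℝ) : ‖g θ‖ ≤ supN g := by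
  obtain ⟨B, hB⟩ := (hper.isBounded_of_continuous Real.two_pi_pos.ne' hg).exists_norm_le
  exact le_ciSup ⟨B, by rintro _ ⟨x, rfl⟩; exact hB _ (mem_range_self x)⟩ θ

section Norm

variable {k : ℕ} {α : ℝ} {f : Circle → ℂ}

lemma normCkR_nonneg (k : ℕ) (α : ℝ) (f : Circle → ℂ) : 0 ≤ normCkR k α f :=
  add_nonneg (Finset.sum_nonneg fun _ _ => supN_nonneg _) (holderSem_nonneg _ _)

lemma norm_iteratedDeriv_liftC_le_supN (hf : ContDiff ℝ (k : ℕ∞) (liftC f)) {j : ℕ} (hj : j ≤ k)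
    (θ : ℝ) : ‖iteratedDeriv j (liftC f) θ‖ ≤ supN (iteratedDeriv j (liftC f)) :=
  norm_le_supN ((periodic_liftC f).iteratedDeriv j)
    (hf.continuous_iteratedDeriv j (by exact_mod_cast hj)) θ

lemma norm_iteratedDeriv_liftC_le_normCkR (hf : ContDiff ℝ (k : ℕ∞) (liftC f)) {j : ℕ}
    (hj : j ≤ k) (θ : ℝ) : ‖iteratedDeriv j (liftC f) θ‖ ≤ normCkR k α f := by
  refine (norm_iteratedDeriv_liftC_le_supN hf hj θ).trans ?_
  refine le_add_of_le_of_nonneg ?_ (holderSem_nonneg _ _)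
  exact Finset.single_le_sum (f := fun j => supN (iteratedDeriv j (liftC f)))
    (fun _ _ => supN_nonneg _) (Finset.mem_range.2 (Nat.lt_succ_of_le hj))

lemma holderSem_le_normCkR (k : ℕ) (α : ℝ) (f : Circle → ℂ) :
    holderSem α (iteratedDeriv k (liftC f)) ≤ normCkR k α f :=
  le_add_of_nonneg_left (Finset.sum_nonneg fun _ _ => supN_nonneg _)

lemma normCkR_le_of_norm_le_of_chordHolder {S : ℕ → ℝ} {H : ℝ}
    (hS : ∀ j ≤ k, ∀ θ, ‖iteratedDeriv j (liftC f) θ‖ ≤ S j)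
    (hH : ChordHolder α H (iteratedDeriv k (liftC f))) (hH0 : 0 ≤ H) :
    normCkR k α f ≤ ∑ j ∈ Finset.range (k + 1), S j + H :=
  add_le_add (Finset.sum_le_sum fun j hj =>
    supN_le (hS j (Nat.lt_succ_iff.1 (Finset.mem_range.1 hj)))) (holderSem_le hH0 hH)

lemma IsCkC.chordHolder (hα : 0 < α) (hf : IsCkC k α f) :
    ChordHolder α (holderSem α (iteratedDeriv k (liftC f))) (iteratedDeriv k (liftC f)) :=
  have ⟨_, hK⟩ := hf.2
  (ChordHolder.of_holderWith hα hK ((periodic_liftC f).iteratedDeriv k)).holderSem hα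

lemma chordHolder_iteratedDeriv_of_norm_le {m j : ℕ} {L : ℝ} {h : ℝ → ℂ} (hα : 0 ≤ α)
    (hα1 : α ≤ 1) (hh : ContDiff ℝ (m : ℕ∞) h) (hj : j < m) (hper : Function.Periodic h (2 * π))
    (hL : ∀ θ, ‖iteratedDeriv (j + 1) h θ‖ ≤ L) : ChordHolder α (π * L) (iteratedDeriv j h) := by
  have hL0 : 0 ≤ L := (norm_nonneg _).trans (hL 0)
  have hlip : LipschitzWith L.toNNReal (iteratedDeriv j h) :=
    lipschitzWith_of_nnnorm_deriv_le (hh.differentiable_iteratedDeriv j (by exact_mod_cast hj))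
      fun θ => by
        rw [← NNReal.coe_le_coe, coe_nnnorm, Real.coe_toNNReal L hL0, ← iteratedDeriv_succ]
        exact hL θ
  simpa [Real.coe_toNNReal L hL0] using
    ChordHolder.of_lipschitzWith hα hα1 hlip (hper.iteratedDeriv j)

lemma IsCkC.chordHolder_iteratedDeriv (hα : 0 < α) (hα1 : α ≤ 1) (hf : IsCkC k α f) {j : ℕ}
    (hj : j ≤ k) : ChordHolder α (π * normCkR k α f) (iteratedDeriv j (liftC f)) := by
  rcases hj.lt_or_eq with hj | rfl
  · exact chordHolder_iteratedDeriv_of_norm_le hα.le hα1 hf.1 hj (periodic_liftC f)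
      (norm_iteratedDeriv_liftC_le_normCkR hf.1 hj)
  · refine (hf.chordHolder hα).mono ((holderSem_le_normCkR _ _ _).trans ?_)
    exact le_mul_of_one_le_left (normCkR_nonneg _ _ _) (by linarith [Real.pi_gt_three])

end Norm

section Operations

variable {k : ℕ} {α : ℝ} {E f g : Circle → ℂ}

lemma iteratedDeriv_liftC_zero (j : ℕ) : iteratedDeriv j (liftC 0) = 0 :=
  funext fun _ => iteratedDeriv_const_zero

lemma isCkC_zero : IsCkC k α 0 :=
  ⟨contDiff_const, 0, by rw [iteratedDeriv_liftC_zero]; exact HolderWith.zero⟩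

lemma normCkR_zero : normCkR k α 0 = 0 := by
  simp [normCkR, supN, holderSem, iteratedDeriv_liftC_zero]

lemma iteratedDeriv_liftC_add (hf : ContDiff ℝ (k : ℕ∞) (liftC f))
    (hg : ContDiff ℝ (k : ℕ∞) (liftC g)) {j : ℕ} (hj : j ≤ k) :
    iteratedDeriv j (liftC (f + g)) = iteratedDeriv j (liftC f) + iteratedDeriv j (liftC g) :=
  funext fun _ => iteratedDeriv_add (hf.of_le (by exact_mod_cast hj)).contDiffAt
    (hg.of_le (by exact_mod_cast hj)).contDiffAt

lemma IsCkC.add (hf : IsCkC k α f) (hg : IsCkC k α g) : IsCkC k α (f + g) := by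
  obtain ⟨Kf, hKf⟩ := hf.2
  obtain ⟨Kg, hKg⟩ := hg.2
  refine ⟨hf.1.add hg.1, Kf + Kg, ?_⟩
  rw [iteratedDeriv_liftC_add hf.1 hg.1 le_rfl]
  exact hKf.add hKg

lemma normCkR_add_le (hα : 0 < α) (hf : IsCkC k α f) (hg : IsCkC k α g) :
    normCkR k α (f + g) ≤ normCkR k α f + normCkR k α g := by
  have hbound := normCkR_le_of_norm_le_of_chordHolder (α := α) (f := f + g)
    (S := fun j => supN (iteratedDeriv j (liftC f)) + supN (iteratedDeriv j (liftC g)))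
    (fun j hj θ => by
      rw [iteratedDeriv_liftC_add hf.1 hg.1 hj]
      exact (norm_add_le _ _).trans (add_le_add (norm_iteratedDeriv_liftC_le_supN hf.1 hj θ)
        (norm_iteratedDeriv_liftC_le_supN hg.1 hj θ)))
    (by
      rw [iteratedDeriv_liftC_add hf.1 hg.1 le_rfl]
      exact (hf.chordHolder hα).add (hg.chordHolder hα))
    (add_nonneg (holderSem_nonneg _ _) (holderSem_nonneg _ _))
  refine hbound.trans_eq ?_
  simp only [normCkR, Finset.sum_add_distrib]
  ring

lemma IsCkC.sum {ι : Type*} (s : Finset ι) {f : ι → Circle → ℂ}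
    (hf : ∀ i ∈ s, IsCkC k α (f i)) :
    IsCkC k α (∑ i ∈ s, f i) :=
  Finset.sum_induction _ _ (fun _ _ => IsCkC.add) isCkC_zero hf

lemma normCkR_sum_le (hα : 0 < α) {ι : Type*} (s : Finset ι) {f : ι → Circle → ℂ}
    (hf : ∀ i ∈ s, IsCkC k α (f i)) :
    normCkR k α (∑ i ∈ s, f i) ≤ ∑ i ∈ s, normCkR k α (f i) :=
  Finset.le_sum_of_subadditive_on_pred _ _ normCkR_zero.le (fun _ _ => normCkR_add_le hα)
    (fun _ _ => IsCkC.add) _ hf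

lemma iteratedDeriv_liftC_mul (hE : ContDiff ℝ (k : ℕ∞) (liftC E))
    (hf : ContDiff ℝ (k : ℕ∞) (liftC f)) {n : ℕ} (hn : n ≤ k) (θ : ℝ) :
    iteratedDeriv n (liftC (E * f)) θ = ∑ i ∈ Finset.range (n + 1),
      n.choose i * (iteratedDeriv i (liftC E) θ * iteratedDeriv (n - i) (liftC f) θ) := by
  simp only [← mul_assoc]
  exact iteratedDeriv_mul (hE.of_le (by exact_mod_cast hn)).contDiffAt
    (hf.of_le (by exact_mod_cast hn)).contDiffAt

lemma norm_iteratedDeriv_liftC_mul_le (hE : ContDiff ℝ ((k + 1 : ℕ) : ℕ∞) (liftC E))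
    (hf : ContDiff ℝ (k : ℕ∞) (liftC f)) {n : ℕ} (hn : n ≤ k) (θ : ℝ) :
    ‖iteratedDeriv n (liftC (E * f)) θ‖ ≤ 2 ^ k * normCkR (k + 1) α E * normCkR k α f := by
  rw [iteratedDeriv_liftC_mul (hE.of_le (by exact_mod_cast k.le_succ)) hf hn]
  calc _ ≤ ∑ i ∈ Finset.range (n + 1),
        (n.choose i : ℝ) * (normCkR (k + 1) α E * normCkR k α f) := by
        refine (norm_sum_le _ _).trans (Finset.sum_le_sum fun i hi => ?_)
        have hi : i ≤ n := Nat.lt_succ_iff.1 (Finset.mem_range.1 hi)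
        rw [norm_mul, norm_mul, Complex.norm_natCast]
        exact mul_le_mul_of_nonneg_left (mul_le_mul
          (norm_iteratedDeriv_liftC_le_normCkR hE (by omega) θ)
          (norm_iteratedDeriv_liftC_le_normCkR hf (by omega) θ) (norm_nonneg _)
          (normCkR_nonneg _ _ _)) (Nat.cast_nonneg _)
    _ = 2 ^ n * (normCkR (k + 1) α E * normCkR k α f) := by
        rw [← Finset.sum_mul, ← Nat.cast_sum, Nat.sum_range_choose, Nat.cast_pow,
          Nat.cast_ofNat]
    _ ≤ _ := by
        rw [mul_assoc]
        gcongr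
        · exact mul_nonneg (normCkR_nonneg _ _ _) (normCkR_nonneg _ _ _)
        · norm_num

lemma chordHolder_iteratedDeriv_liftC_mul (hα : 0 < α) (hα1 : α ≤ 1)
    (hE : ContDiff ℝ ((k + 1 : ℕ) : ℕ∞) (liftC E)) (hf : IsCkC k α f) :
    ChordHolder α (2 ^ k * (2 * π * normCkR (k + 1) α E * normCkR k α f))
      (iteratedDeriv k (liftC (E * f))) := by
  set B := normCkR (k + 1) α E
  set N := normCkR k α f
  rw [funext (iteratedDeriv_liftC_mul (hE.of_le (by exact_mod_cast k.le_succ)) hf.1 le_rfl)]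
  refine (ChordHolder.sum (C := fun i => ‖(k.choose i : ℂ)‖ * (B * (π * N) + π * B * N))
    fun i hi => ?_).mono ?_
  · have hik : i < k + 1 := Finset.mem_range.1 hi
    exact ((chordHolder_iteratedDeriv_of_norm_le hα.le hα1 hE hik (periodic_liftC E)
      (norm_iteratedDeriv_liftC_le_normCkR hE hik)).mul
      (hf.chordHolder_iteratedDeriv hα hα1 (Nat.sub_le k i))
      (norm_iteratedDeriv_liftC_le_normCkR hE hik.le)
      (norm_iteratedDeriv_liftC_le_normCkR hf.1 (Nat.sub_le k i))).const_mul _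
  simp only [Complex.norm_natCast, ← Finset.sum_mul]
  rw [show (∑ i ∈ Finset.range (k + 1), (k.choose i : ℝ)) = 2 ^ k by
    exact_mod_cast Nat.sum_range_choose k]
  apply le_of_eq
  ring

lemma IsCkC.mul_of_contDiff (hα : 0 < α) (hα1 : α ≤ 1)
    (hE : ContDiff ℝ ((k + 1 : ℕ) : ℕ∞) (liftC E)) (hf : IsCkC k α f) : IsCkC k α (E * f) :=
  ⟨(hE.of_le (by exact_mod_cast k.le_succ)).mul hf.1, _,
    (chordHolder_iteratedDeriv_liftC_mul hα hα1 hE hf).holderWith hα.le⟩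

lemma normCkR_mul_le (hα : 0 < α) (hα1 : α ≤ 1)
    (hE : ContDiff ℝ ((k + 1 : ℕ) : ℕ∞) (liftC E)) (hf : IsCkC k α f) :
    normCkR k α (E * f) ≤ 2 ^ k * (k + 1 + 2 * π) * normCkR (k + 1) α E * normCkR k α f := by
  have := normCkR_nonneg (k + 1) α E
  have := normCkR_nonneg k α f
  refine (normCkR_le_of_norm_le_of_chordHolder
    (fun j hj => norm_iteratedDeriv_liftC_mul_le (α := α) hE hf.1 hj)
    (chordHolder_iteratedDeriv_liftC_mul hα hα1 hE hf) (by positivity)).trans_eq ?_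
  rw [Finset.sum_const, Finset.card_range, nsmul_eq_mul]
  push_cast
  ring

end Operations

def pointwiseMulVec {ι : Type*} [Fintype ι] (M : Circle → Matrix ι ι ℂ) (u : ι → Circle → ℂ) :
    ι → Circle → ℂ :=
  fun i z => Matrix.mulVec (M z) (fun j => u j z) i

section PointwiseMulVec

variable {ι : Type*} [Fintype ι] {M N : Circle → Matrix ι ι ℂ} {u : ι → Circle → ℂ}

lemma pointwiseMulVec_eq_sum (M : Circle → Matrix ι ι ℂ) (u : ι → Circle → ℂ) (i : ι) :
    pointwiseMulVec M u i = ∑ j, (fun z => M z i j) * u j := by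
  ext z
  simp [pointwiseMulVec, Matrix.mulVec, dotProduct]

lemma pointwiseMulVec_add (M : Circle → Matrix ι ι ℂ) (u v : ι → Circle → ℂ) :
    pointwiseMulVec M (u + v) = pointwiseMulVec M u + pointwiseMulVec M v := by
  ext i z
  exact congrFun (Matrix.mulVec_add (M z) (fun j => u j z) (fun j => v j z)) i

lemma pointwiseMulVec_smul (M : Circle → Matrix ι ι ℂ) (c : ℝ) (u : ι → Circle → ℂ) :
    pointwiseMulVec M (c • u) = c • pointwiseMulVec M u := by
  ext i z
  exact congrFun (Matrix.mulVec_smul (M z) c (fun j => u j z)) i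

lemma pointwiseMulVec_pointwiseMulVec_of_mul_eq_one [DecidableEq ι] (h : ∀ z, M z * N z = 1)
    (u : ι → Circle → ℂ) : pointwiseMulVec M (pointwiseMulVec N u) = u := by
  ext i z
  simp [pointwiseMulVec, Matrix.mulVec_mulVec, h]

lemma isRealValued_pointwiseMulVec (hM : ∀ z i j, (M z i j).im = 0)
    (hu : ∀ j, IsRealValued (u j)) (i : ι) : IsRealValued (pointwiseMulVec M u i) := fun z => by
  simp [pointwiseMulVec, Matrix.mulVec, dotProduct, Complex.im_sum, hM, hu _ z]

lemma pointwiseMulVec_negCircle (hM : ∀ z, M (negCircle z) = -M z) {s : ℂ}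
    (hu : ∀ j z, u j (negCircle z) = s * u j z) (i : ι) (z : Circle) :
    pointwiseMulVec M u i (negCircle z) = -s * pointwiseMulVec M u i z := by
  have hu' : (fun j => u j (negCircle z)) = s • fun j => u j z := funext fun j => hu j z
  simp only [pointwiseMulVec, hM, hu', Matrix.neg_mulVec, Matrix.mulVec_smul]
  simp

variable {k : ℕ} {α : ℝ}

lemma isCkC_pointwiseMulVec (hα : 0 < α) (hα1 : α ≤ 1)
    (hM : ∀ i j, ContDiff ℝ ((k + 1 : ℕ) : ℕ∞) (liftC fun z => M z i j))
    (hu : ∀ j, IsCkC k α (u j)) (i : ι) : IsCkC k α (pointwiseMulVec M u i) := by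
  rw [pointwiseMulVec_eq_sum]
  exact IsCkC.sum _ fun j _ => (hu j).mul_of_contDiff hα hα1 (hM i j)

lemma exists_sum_normCkR_pointwiseMulVec_le (hα : 0 < α) (hα1 : α ≤ 1)
    (hM : ∀ i j, ContDiff ℝ ((k + 1 : ℕ) : ℕ∞) (liftC fun z => M z i j)) :
    ∃ C, ∀ u : ι → Circle → ℂ, (∀ j, IsCkC k α (u j)) →
      ∑ i, normCkR k α (pointwiseMulVec M u i) ≤ C * ∑ j, normCkR k α (u j) := by
  set K := fun i j => 2 ^ k * (k + 1 + 2 * π) * normCkR (k + 1) α (fun z => M z i j)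
  refine ⟨∑ i, ∑ j, K i j, fun u hu => ?_⟩
  have hK : ∀ i j, 0 ≤ K i j := fun i j => by
    have := normCkR_nonneg (k + 1) α (fun z => M z i j)
    positivity
  have hN : ∀ j, normCkR k α (u j) ≤ ∑ j', normCkR k α (u j') := fun j =>
    Finset.single_le_sum (fun j' _ => normCkR_nonneg k α (u j')) (Finset.mem_univ j)
  calc ∑ i, normCkR k α (pointwiseMulVec M u i)
      ≤ ∑ i, ∑ j, K i j * normCkR k α (u j) := Finset.sum_le_sum fun i _ => by
        rw [pointwiseMulVec_eq_sum]
        exact (normCkR_sum_le hα _ fun j _ => (hu j).mul_of_contDiff hα hα1 (hM i j)).trans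
          (Finset.sum_le_sum fun j _ => normCkR_mul_le hα hα1 (hM i j) (hu j))
    _ ≤ ∑ i, ∑ j, K i j * ∑ j', normCkR k α (u j') := by
        gcongr with i _ j _
        exacts [hK i j, hN j]
    _ = _ := by simp only [← Finset.sum_mul]

lemma mapsTo_pointwiseMulVec_ckOdd (hα : 0 < α) (hα1 : α ≤ 1)
    (hMs : ∀ i j, ContDiff ℝ ((k + 1 : ℕ) : ℕ∞) (liftC fun z => M z i j))
    (hMr : ∀ z i j, (M z i j).im = 0) (hMo : ∀ z, M (negCircle z) = -M z) :
    MapsTo (pointwiseMulVec M) {u | ∀ i, u i ∈ CkOdd k α} {u | ∀ i, u i ∈ CkEven k α} :=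
  fun u hu i => ⟨isCkC_pointwiseMulVec hα hα1 hMs (fun j => (hu j).1) i,
    isRealValued_pointwiseMulVec hMr (fun j => (hu j).2.1) i,
    fun z => by
      have hu' : ∀ j z, u j (negCircle z) = (-1 : ℂ) * u j z := fun j z => by
        simpa using (hu j).2.2 z
      simpa using pointwiseMulVec_negCircle hMo hu' i z⟩

lemma mapsTo_pointwiseMulVec_ckEven (hα : 0 < α) (hα1 : α ≤ 1)
    (hMs : ∀ i j, ContDiff ℝ ((k + 1 : ℕ) : ℕ∞) (liftC fun z => M z i j))
    (hMr : ∀ z i j, (M z i j).im = 0) (hMo : ∀ z, M (negCircle z) = -M z) :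
    MapsTo (pointwiseMulVec M) {u | ∀ i, u i ∈ CkEven k α} {u | ∀ i, u i ∈ CkOdd k α} :=
  fun u hu i => ⟨isCkC_pointwiseMulVec hα hα1 hMs (fun j => (hu j).1) i,
    isRealValued_pointwiseMulVec hMr (fun j => (hu j).2.1) i,
    fun z => by
      have hu' : ∀ j z, u j (negCircle z) = (1 : ℂ) * u j z := fun j z => by
        simpa using (hu j).2.2 z
      simpa using pointwiseMulVec_negCircle hMo hu' i z⟩

end PointwiseMulVec

def rotMat (z : Circle) : Matrix (Fin 2) (Fin 2) ℂ :=
  !![(((z : ℂ).re : ℂ)), (((z : ℂ).im : ℂ)); (-((z : ℂ).im : ℂ)), (((z : ℂ).re : ℂ))]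

lemma rotMat_mul_transpose (z : Circle) : rotMat z * (rotMat z).transpose = 1 := by
  have h : (z : ℂ).re ^ 2 + (z : ℂ).im ^ 2 = 1 := by
    rw [← Circle.normSq_coe z, Complex.normSq_apply]; ring
  have h' : ((z : ℂ).re : ℂ) ^ 2 + ((z : ℂ).im : ℂ) ^ 2 = 1 := by exact_mod_cast h
  ext i j
  fin_cases i <;> fin_cases j <;> simp [rotMat, Matrix.mul_apply, ← sq]
  · exact h'
  · ring
  · ring
  · linear_combination h'

lemma transpose_rotMat_mul (z : Circle) : (rotMat z).transpose * rotMat z = 1 :=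
  mul_eq_one_comm.1 (rotMat_mul_transpose z)

lemma im_rotMat (z : Circle) (i j : Fin 2) : (rotMat z i j).im = 0 := by
  fin_cases i <;> fin_cases j <;> simp [rotMat]

lemma rotMat_negCircle (z : Circle) : rotMat (negCircle z) = -rotMat z := by
  ext i j
  fin_cases i <;> fin_cases j <;> simp [rotMat, negCircle]

lemma transpose_rotMat_negCircle (z : Circle) :
    (rotMat (negCircle z)).transpose = -(rotMat z).transpose := by
  rw [rotMat_negCircle, Matrix.transpose_neg]

lemma contDiff_liftC_comp {n : WithTop ℕ∞} {F : ℂ → ℂ} (hF : ContDiff ℝ n F) :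
    ContDiff ℝ n (liftC fun z => F z) := by
  have : liftC (fun z => F z) = fun θ : ℝ => F (exp (θ * I)) := funext fun θ => by
    simp [liftC, Circle.coe_exp]
  have hθ : ContDiff ℝ n (fun θ : ℝ => (θ : ℂ)) := ofRealCLM.contDiff
  rw [this]
  fun_prop

lemma contDiff_liftC_rotMat (n : WithTop ℕ∞) (i j : Fin 2) :
    ContDiff ℝ n (liftC fun z => rotMat z i j) := by
  have hre : ContDiff ℝ n fun w : ℂ => (w.re : ℂ) := (ofRealCLM.comp reCLM).contDiff
  have him : ContDiff ℝ n fun w : ℂ => (w.im : ℂ) := (ofRealCLM.comp imCLM).contDiff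
  fin_cases i <;> fin_cases j
  exacts [contDiff_liftC_comp hre, contDiff_liftC_comp him, contDiff_liftC_comp him.neg,
    contDiff_liftC_comp hre]

/-- The map `u ↦ M(ξ) u`, `M(ξ) = [[Re ξ, Im ξ], [-Im ξ, Re ξ]]`, is a
Banach space isomorphism from `(C^{k,α}_o)²` onto `(C^{k,α}_e)²`. -/
theorem stmt_10 (k : ℕ) (α : ℝ) (hα : 0 < α) (hα' : α < 1) :
    let σ : (Fin 2 → Circle → ℂ) → (Fin 2 → Circle → ℂ) := fun u => fun i z =>
      (Matrix.mulVec
        !![(((z : ℂ).re : ℂ)), (((z : ℂ).im : ℂ));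
           (-((z : ℂ).im : ℂ)), (((z : ℂ).re : ℂ))]
        (fun j => u j z)) i
    Set.BijOn σ {u | ∀ i, u i ∈ CkOdd k α} {u | ∀ i, u i ∈ CkEven k α} ∧
    (∀ u w, σ (u + w) = σ u + σ w) ∧
    (∀ (c : ℝ) (u), σ (c • u) = c • σ u) ∧
    ∃ C > 0, ∀ u : Fin 2 → Circle → ℂ, (∀ i, u i ∈ CkOdd k α) →
      (∑ i, normCkR k α (σ u i)) ≤ C * (∑ i, normCkR k α (u i)) ∧
      (∑ i, normCkR k α (u i)) ≤ C * (∑ i, normCkR k α (σ u i)) := by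
  intro σ
  have hσ : σ = pointwiseMulVec rotMat := rfl
  clear_value σ
  subst hσ
  set τ := pointwiseMulVec fun z => (rotMat z).transpose
  have hτσ : Function.LeftInverse τ (pointwiseMulVec rotMat) :=
    pointwiseMulVec_pointwiseMulVec_of_mul_eq_one transpose_rotMat_mul
  have hστ : Function.LeftInverse (pointwiseMulVec rotMat) τ :=
    pointwiseMulVec_pointwiseMulVec_of_mul_eq_one rotMat_mul_transpose
  have hM := contDiff_liftC_rotMat ((k + 1 : ℕ) : ℕ∞)
  have hσmaps := mapsTo_pointwiseMulVec_ckOdd hα hα'.le hM im_rotMat rotMat_negCircle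
  have hτmaps := mapsTo_pointwiseMulVec_ckEven hα hα'.le (fun i j => hM j i)
    (fun z i j => im_rotMat z j i) transpose_rotMat_negCircle
  obtain ⟨C₁, hC₁⟩ := exists_sum_normCkR_pointwiseMulVec_le hα hα'.le hM
  obtain ⟨C₂, hC₂⟩ := exists_sum_normCkR_pointwiseMulVec_le hα hα'.le (fun i j => hM j i)
  have hsum (v : Fin 2 → Circle → ℂ) : 0 ≤ ∑ i, normCkR k α (v i) :=
    Finset.sum_nonneg fun i _ => normCkR_nonneg k α (v i)
  refine ⟨InvOn.bijOn ⟨hτσ.leftInvOn _, hστ.leftInvOn _⟩ hσmaps hτmaps,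
    pointwiseMulVec_add _, fun c u => pointwiseMulVec_smul _ c u, max (max C₁ C₂) 1,
    by positivity, fun u hu => ⟨?_, ?_⟩⟩
  · exact (hC₁ u fun j => (hu j).1).trans
      (mul_le_mul_of_nonneg_right (le_max_of_le_left (le_max_left _ _)) (hsum u))
  · calc ∑ i, normCkR k α (u i) = ∑ i, normCkR k α (τ (pointwiseMulVec rotMat u) i) := by
          rw [hτσ u]
      _ ≤ C₂ * ∑ i, normCkR k α (pointwiseMulVec rotMat u i) :=
          hC₂ _ fun j => (hσmaps hu j).1
      _ ≤ _ := mul_le_mul_of_nonneg_right (le_max_of_le_left (le_max_right _ _)) (hsum _)
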